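/- arXiv:2405.08634 — 2 statements merged into one kernel-verified Lean document; each statement's English description precedes it below -/
import Mathlib

section
/- Let 0 < τ₀ ≤ τ₁, let u : [0,τ₀] → ℝ and v : [0,τ₁] → ℝ be piecewise continuous, and extend u by 0 outside [0,τ₀] and v by 0 outside [0,τ₁]. Then for every s ∈ ℂ, ∫₀^{τ₀} (∫₀^{τ₁} e^{−(r+η)s} v(η)dη) u(r)dr = ∫₀^{τ₀} (∫₀^ν v(η)u(ν−η)dη) e^{−νs}dν + ∫_{τ₀}^{τ₁} (∫_{ν−τ₀}^ν v(η)u(ν−η)dη) e^{−νs}dν + ∫_{τ₁}^{τ₁+τ₀} (∫_{ν−τ₀}^{τ₁} v(η)u(ν−η)dη) e^{−νs}dν. -/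
/-!
With `F r = e^{-rs} u r` and `G η = e^{-ηs} v η`, the left-hand side factors as
`(∫ G) * (∫ F) = ∫ (G ⋆ F)`, and `(G ⋆ F) ν = e^{-νs} (v ⋆ u) ν` because `e^{-νs}` is a
character of `(ℝ, +)`. As `v ⋆ u` vanishes off `[0, τ₁ + τ₀]`, this integral splits at `τ₀`
and `τ₁`; on each piece, the constraints `η ∈ [0, τ₁]` and `ν - η ∈ [0, τ₀]` cut the
convolution integral down to the stated limits.
-/

open MeasureTheory Set

noncomputable section

/-- `f` is piecewise continuous on `[a,b]`: continuous off a finite set and bounded. -/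
def PwContOn (f : ℝ → ℝ) (a b : ℝ) : Prop :=
  (∃ S : Finset ℝ, ContinuousOn f (Set.Icc a b \ ↑S)) ∧
    ∃ C : ℝ, ∀ x ∈ Set.Icc a b, |f x| ≤ C

/-- `f` is piecewise continuously differentiable on `[a,b]`. -/
def PwC1On (f : ℝ → ℝ) (a b : ℝ) : Prop :=
  PwContOn f a b ∧
    ∃ S : Finset ℝ, DifferentiableOn ℝ f (Set.Icc a b \ ↑S) ∧ PwContOn (deriv f) a b

/-- Sup norm of the partial trajectory `θ ∈ [-τ,0] ↦ φ(t+θ)`. -/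
def wNorm (φ : ℝ → ℝ) (τ t : ℝ) : ℝ :=
  sSup ((fun θ => |φ (t + θ)|) '' Set.Icc (-τ) 0)

/-- `F₀(s) = 1 - a e^{-τ₀ s} - ∫₀^{τ₀} N(ν) e^{-ν s} dν`. -/
def F0 (a τ₀ : ℝ) (N : ℝ → ℝ) (s : ℂ) : ℂ :=
  1 - (a : ℂ) * Complex.exp (-(τ₀ : ℂ) * s)
    - ∫ ν in (0:ℝ)..τ₀, (N ν : ℂ) * Complex.exp (-(ν : ℂ) * s)

/-- `F₁(s) = b e^{-τ₁ s} + ∫₀^{τ₁} M(ν) e^{-ν s} dν`. -/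
def F1 (b τ₁ : ℝ) (M : ℝ → ℝ) (s : ℂ) : ℂ :=
  (b : ℂ) * Complex.exp (-(τ₁ : ℂ) * s)
    + ∫ ν in (0:ℝ)..τ₁, (M ν : ℂ) * Complex.exp (-(ν : ℂ) * s)

/-- `I₁(ν)`, for `ν ∈ [0,τ₀]`. -/
def I1 (N M f g : ℝ → ℝ) (ν : ℝ) : ℝ :=
  g ν + N ν + (∫ η in (0:ℝ)..ν, f η * M (ν - η)) - ∫ η in (0:ℝ)..ν, g η * N (ν - η)

/-- `I₂(ν)`, for `ν ∈ (τ₀,τ₁]`. -/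
def I2 (a τ₀ : ℝ) (N M f g : ℝ → ℝ) (ν : ℝ) : ℝ :=
  g ν - a * g (ν - τ₀) + (∫ η in (0:ℝ)..τ₀, f η * M (ν - η))
    - ∫ η in (ν - τ₀)..ν, g η * N (ν - η)

/-- `I₃(ν)`, for `ν ∈ [τ₁,τ₀+τ₁]`. -/
def I3 (a b τ₀ τ₁ : ℝ) (N M f g : ℝ → ℝ) (ν : ℝ) : ℝ :=
  b * f (ν - τ₁) + (∫ η in (ν - τ₁)..τ₀, f η * M (ν - η))
    - a * g (ν - τ₀) - ∫ η in (ν - τ₀)..τ₁, g η * N (ν - η)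

open scoped Convolution

lemma PwContOn.integrableOn_Icc {f : ℝ → ℝ} {a b : ℝ} (hf : PwContOn f a b) :
    IntegrableOn f (Icc a b) := by
  obtain ⟨⟨S, hcont⟩, C, hC⟩ := hf
  have hmeas : AEStronglyMeasurable f (volume.restrict (Icc a b)) := by
    rw [← Measure.restrict_congr_set (sdiff_null_ae_eq_self (S.finite_toSet.measure_zero _))]
    exact hcont.aestronglyMeasurable (measurableSet_Icc.diff S.finite_toSet.measurableSet)
  exact ⟨hmeas, .restrict_of_bounded (C := C) measure_Icc_lt_top
    ((ae_restrict_iff' measurableSet_Icc).2 (Filter.Eventually.of_forall hC))⟩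

lemma PwContOn.integrable_continuous_mul {f : ℝ → ℝ} {a b : ℝ} (hf : PwContOn f a b)
    (hf0 : ∀ x ∉ Icc a b, f x = 0) {w : ℝ → ℂ} (hw : Continuous w) :
    Integrable (fun x => w x * f x) := by
  have hfC : IntegrableOn (fun x => (f x : ℂ)) (Icc a b) := hf.integrableOn_Icc.ofReal
  refine (integrableOn_iff_integrable_of_support_subset fun x hx => ?_).1
    (hfC.continuousOn_mul hw.continuousOn isCompact_Icc)
  by_contra hx'
  simp [hf0 x hx'] at hx

lemma intervalIntegral_eq_integral_of_forall_notMem_eq_zero {E : Type*}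
    [NormedAddCommGroup E] [NormedSpace ℝ E] {f : ℝ → E} {c d : ℝ} (hcd : c ≤ d)
    (hf0 : ∀ x ∉ Icc c d, f x = 0) :
    ∫ x in c..d, f x = ∫ x, f x := by
  rw [intervalIntegral.integral_of_le hcd, ← integral_Icc_eq_integral_Ioc,
    setIntegral_eq_integral_of_forall_compl_eq_zero hf0]

section Convolution

variable {f g : ℝ → ℝ} {a b : ℝ}

/-- `f t * g (ν - t)` can only be nonzero for `t ∈ [max 0 (ν - b), min a ν]`. -/
lemma convolution_eq_intervalIntegral (hf : ∀ x ∉ Icc 0 a, f x = 0)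
    (hg : ∀ x ∉ Icc 0 b, g x = 0) {c d ν : ℝ} (hc : c ≤ max 0 (ν - b))
    (hd : min a ν ≤ d) (hcd : c ≤ d) :
    (f ⋆ g) ν = ∫ t in c..d, f t * g (ν - t) := by
  rw [intervalIntegral_eq_integral_of_forall_notMem_eq_zero hcd]
  · rfl
  intro t ht
  by_cases hft : t ∈ Icc 0 a
  · refine mul_eq_zero_of_right _ (hg _ fun hgt => ht ?_)
    simp only [mem_Icc] at hft hgt
    exact ⟨hc.trans (max_le hft.1 (by linarith)), (le_min hft.2 (by linarith)).trans hd⟩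
  · exact mul_eq_zero_of_left (hf t hft) _

lemma convolution_eq_zero_of_notMem_Icc (hf : ∀ x ∉ Icc 0 a, f x = 0)
    (hg : ∀ x ∉ Icc 0 b, g x = 0) {ν : ℝ} (hν : ν ∉ Icc 0 (a + b)) : (f ⋆ g) ν = 0 := by
  rcases not_and_or.1 (mem_Icc.not.1 hν) with hν | hν
  · rw [convolution_eq_intervalIntegral hf hg (c := 0) (d := 0) (le_max_left _ _)
      (min_le_of_right_le (by linarith)) le_rfl, intervalIntegral.integral_same]
  · rw [convolution_eq_intervalIntegral hf hg (c := a) (d := a)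
      (le_max_of_le_right (by linarith)) (min_le_left _ _) le_rfl,
      intervalIntegral.integral_same]

end Convolution

lemma convolution_exp_mul (f g : ℝ → ℝ) (s : ℂ) (ν : ℝ) :
    ((fun x : ℝ => Complex.exp (-(x:ℂ) * s) * f x) ⋆[ContinuousLinearMap.mul ℂ ℂ]
        fun x : ℝ => Complex.exp (-(x:ℂ) * s) * g x) ν
      = ((f ⋆ g) ν : ℂ) * Complex.exp (-(ν:ℂ) * s) := by
  rw [convolution_mul, convolution_lsmul, ← integral_complex_ofReal, ← integral_mul_const]
  congr 1 with t
  rw [show -(ν:ℂ) * s = -(t:ℂ) * s + -((ν - t : ℝ) : ℂ) * s by push_cast; ring,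
    Complex.exp_add]
  push_cast [smul_eq_mul]
  ring

lemma intervalIntegral_exp_add_mul_eq_mul {u v : ℝ → ℝ} {a b : ℝ} (ha : 0 ≤ a) (hb : 0 ≤ b)
    (hu0 : ∀ x ∉ Icc 0 a, u x = 0) (hv0 : ∀ x ∉ Icc 0 b, v x = 0) (s : ℂ) :
    ∫ r in (0:ℝ)..a,
        (∫ η in (0:ℝ)..b, Complex.exp (-((r:ℂ) + (η:ℂ)) * s) * (v η : ℂ)) * (u r : ℂ)
      = (∫ η : ℝ, Complex.exp (-(η:ℂ) * s) * v η) *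
          ∫ r : ℝ, Complex.exp (-(r:ℂ) * s) * u r := by
  have inner (r : ℝ) : ∫ η in (0:ℝ)..b, Complex.exp (-((r:ℂ) + (η:ℂ)) * s) * (v η : ℂ)
      = Complex.exp (-(r:ℂ) * s) * ∫ η : ℝ, Complex.exp (-(η:ℂ) * s) * v η := by
    rw [← intervalIntegral_eq_integral_of_forall_notMem_eq_zero hb
        fun x hx => by simp [hv0 x hx],
      ← intervalIntegral.integral_const_mul]
    refine intervalIntegral.integral_congr fun η _ => ?_
    simp only [neg_add, add_mul, Complex.exp_add]
    ring
  simp_rw [inner]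
  rw [← intervalIntegral_eq_integral_of_forall_notMem_eq_zero
      (f := fun r : ℝ => Complex.exp (-(r:ℂ) * s) * u r) ha fun x hx => by simp [hu0 x hx],
    ← intervalIntegral.integral_const_mul]
  refine intervalIntegral.integral_congr fun r _ => ?_
  ring

/-- **Fubini rearrangement of the double convolution integral.** For `u` supported in
`[0,τ₀]` and `v` supported in `[0,τ₁]` (piecewise continuous, extended by zero), and
any `s ∈ ℂ`,
`∫₀^{τ₀} (∫₀^{τ₁} e^{-(r+η)s} v(η) dη) u(r) dr` splits into the three convolution
pieces over `[0,τ₀]`, `[τ₀,τ₁]` and `[τ₁,τ₁+τ₀]`. -/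
theorem stmt6
    (τ₀ τ₁ : ℝ) (u v : ℝ → ℝ)
    (hτ₀ : 0 < τ₀) (hττ : τ₀ ≤ τ₁)
    (hu : PwContOn u 0 τ₀) (hv : PwContOn v 0 τ₁)
    (hu0 : ∀ x, x ∉ Set.Icc 0 τ₀ → u x = 0)
    (hv0 : ∀ x, x ∉ Set.Icc 0 τ₁ → v x = 0)
    (s : ℂ) :
    (∫ r in (0:ℝ)..τ₀, (∫ η in (0:ℝ)..τ₁, Complex.exp (-((r:ℂ) + (η:ℂ)) * s) * (v η : ℂ))
        * (u r : ℂ))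
      = (∫ ν in (0:ℝ)..τ₀,
          ((∫ η in (0:ℝ)..ν, v η * u (ν - η) : ℝ) : ℂ) * Complex.exp (-(ν:ℂ) * s))
      + (∫ ν in τ₀..τ₁,
          ((∫ η in (ν - τ₀)..ν, v η * u (ν - η) : ℝ) : ℂ) * Complex.exp (-(ν:ℂ) * s))
      + ∫ ν in τ₁..(τ₁ + τ₀),
          ((∫ η in (ν - τ₀)..τ₁, v η * u (ν - η) : ℝ) : ℂ) * Complex.exp (-(ν:ℂ) * s) := by
  have hτ₁ : 0 ≤ τ₁ := hτ₀.le.trans hττ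
  set Ψ : ℝ → ℂ := fun ν => ((v ⋆ u) ν : ℂ) * Complex.exp (-(ν:ℂ) * s) with hΨ
  have hv_exp := hv.integrable_continuous_mul hv0
    (w := fun x : ℝ => Complex.exp (-(x:ℂ) * s)) (by fun_prop)
  have hu_exp := hu.integrable_continuous_mul hu0
    (w := fun x : ℝ => Complex.exp (-(x:ℂ) * s)) (by fun_prop)
  have hconv : (fun x : ℝ => Complex.exp (-(x:ℂ) * s) * v x) ⋆[ContinuousLinearMap.mul ℂ ℂ]
      (fun x : ℝ => Complex.exp (-(x:ℂ) * s) * u x) = Ψ := funext (convolution_exp_mul v u s)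
  have hΨint : Integrable Ψ := hconv ▸ hv_exp.integrable_convolution _ hu_exp
  have hLHS : ∫ ν in (0:ℝ)..(τ₁ + τ₀), Ψ ν = ∫ r in (0:ℝ)..τ₀,
      (∫ η in (0:ℝ)..τ₁, Complex.exp (-((r:ℂ) + (η:ℂ)) * s) * (v η : ℂ)) * (u r : ℂ) := by
    rw [intervalIntegral_eq_integral_of_forall_notMem_eq_zero (by linarith) fun ν hν => by
        simp [hΨ, convolution_eq_zero_of_notMem_Icc hv0 hu0 hν],
      intervalIntegral_exp_add_mul_eq_mul hτ₀.le hτ₁ hu0 hv0, ← hconv,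
      integral_convolution _ hv_exp hu_exp]
    rfl
  have piece {c d ν : ℝ} (hc : c ≤ max 0 (ν - τ₀)) (hd : min τ₁ ν ≤ d) (hcd : c ≤ d) :
      Ψ ν = ((∫ η in c..d, v η * u (ν - η) : ℝ) : ℂ) * Complex.exp (-(ν:ℂ) * s) := by
    simp only [hΨ, convolution_eq_intervalIntegral hv0 hu0 hc hd hcd]
  rw [← hLHS, ← intervalIntegral.integral_add_adjacent_intervals (b := τ₁)
      hΨint.intervalIntegrable hΨint.intervalIntegrable,
    ← intervalIntegral.integral_add_adjacent_intervals (b := τ₀)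
      hΨint.intervalIntegrable hΨint.intervalIntegrable]
  refine congrArg₂ (· + ·) (congrArg₂ (· + ·) ?_ ?_) ?_
  · refine intervalIntegral.integral_congr fun ν hν =>
      piece (le_max_left _ _) (min_le_right _ _) ?_
    exact (uIcc_of_le hτ₀.le ▸ hν).1
  · exact intervalIntegral.integral_congr fun ν _ =>
      piece (le_max_right _ _) (min_le_right _ _) (by linarith)
  · refine intervalIntegral.integral_congr fun ν hν =>
      piece (le_max_right _ _) (min_le_left _ _) ?_
    rw [uIcc_of_le (by linarith)] at hν
    linarith [hν.2]
end
end

section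
/- Let a ∈ ℝ, let M, N : [0,1] → ℝ be continuously differentiable, and let f, g : [0,1] → ℝ be continuously differentiable. Then for every s ∈ ℂ, (1 − a·e^{−s} − ∫₀¹ N(ν)e^{−νs}dν)·(1 − ∫₀¹ g(ν)e^{−νs}dν) − (∫₀¹ M(ν)e^{−νs}dν)·(f(0) − f(1)e^{−s} + ∫₀¹ f'(ν)e^{−νs}dν) = 1 − a·e^{−s} − ∫₀¹ e^{−νs}I₁(ν)dν − ∫₁² e^{−νs}I₃(ν)dν. -/
open MeasureTheory Set

noncomputable section

/-- `I₁(ν)` for the degenerate case `b = 0`, `τ₀ = τ₁ = 1`, `ν ∈ [0,1]`. -/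
def J1 (M N f g : ℝ → ℝ) (ν : ℝ) : ℝ :=
  g ν + M 0 * f ν + N ν + (∫ η in (0:ℝ)..ν, f η * deriv M (ν - η))
    - ∫ η in (0:ℝ)..ν, g η * N (ν - η)

/-- `I₃(ν)` for the degenerate case `b = 0`, `τ₀ = τ₁ = 1`, `ν ∈ [1,2]`. -/
def J3 (a : ℝ) (M N f g : ℝ → ℝ) (ν : ℝ) : ℝ :=
  -(M 1) * f (ν - 1) + (∫ η in (ν - 1)..(1:ℝ), f η * deriv M (ν - η))
    - a * g (ν - 1) - ∫ η in (ν - 1)..(1:ℝ), g η * N (ν - η)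

/-! Write `L h = ∫₀¹ h(ν) e^{-νs} dν`. Integration by parts gives `f(0) - f(1)e^{-s} + L f' = s L f`
and `M(0) - M(1)e^{-s} + L M' = s L M`, so the `M`-term on the left equals
`(L f)(M(0) - M(1)e^{-s} + L M')`. The products `(L g)(L N)` and `(L f)(L M')` are transforms of
convolutions of functions supported in `[0,1]`; splitting these at `ν = 1` produces exactly the
convolution integrals in `I₁` and `I₃`, and the identity becomes a ring identity. -/

open scoped Convolution

section TruncatedConvolution

variable {u v : ℝ → ℂ} {T : ℝ}

theorem convolution_indicator_Ioc_apply (ν : ℝ) :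
    ((Ioc 0 T).indicator u ⋆[ContinuousLinearMap.mul ℂ ℂ] (Ioc 0 T).indicator v) ν
      = ∫ η in Ioc 0 T ∩ Ico (ν - T) ν, u η * v (ν - η) := by
  have hpre : Ico (ν - T) ν = (ν - ·) ⁻¹' Ioc 0 T := by rw [preimage_const_sub_Ioc, sub_zero]
  rw [convolution_def, ← integral_indicator (measurableSet_Ioc.inter measurableSet_Ico)]
  congr 1 with η
  rw [inter_indicator_mul, hpre, ContinuousLinearMap.mul_apply']
  exact congrArg _ (indicator_comp_right (ν - ·) (g := v)).symm

theorem convolution_indicator_Ioc_of_mem_Ioc {ν : ℝ} (hν : ν ∈ Ioc 0 T) :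
    ((Ioc 0 T).indicator u ⋆[ContinuousLinearMap.mul ℂ ℂ] (Ioc 0 T).indicator v) ν
      = ∫ η in 0..ν, u η * v (ν - η) := by
  have hset : Ioc 0 T ∩ Ico (ν - T) ν = Ioo 0 ν := by
    ext η; simp only [mem_inter_iff, mem_Ioc, mem_Ico, mem_Ioo]; grind
  rw [convolution_indicator_Ioc_apply, hset, intervalIntegral.integral_of_le hν.1.le,
    integral_Ioc_eq_integral_Ioo]

theorem convolution_indicator_Ioc_of_mem_Ioc_two_mul {ν : ℝ} (hν : ν ∈ Ioc T (2 * T)) :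
    ((Ioc 0 T).indicator u ⋆[ContinuousLinearMap.mul ℂ ℂ] (Ioc 0 T).indicator v) ν
      = ∫ η in (ν - T)..T, u η * v (ν - η) := by
  have hset : Ioc 0 T ∩ Ico (ν - T) ν = Icc (ν - T) T := by
    ext η; simp only [mem_inter_iff, mem_Ioc, mem_Ico, mem_Icc]; grind
  rw [convolution_indicator_Ioc_apply, hset, intervalIntegral.integral_of_le (by linarith [hν.2]),
    integral_Icc_eq_integral_Ioc]

theorem convolution_indicator_Ioc_of_notMem {ν : ℝ} (hν : ν ∉ Ioc 0 (2 * T)) :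
    ((Ioc 0 T).indicator u ⋆[ContinuousLinearMap.mul ℂ ℂ] (Ioc 0 T).indicator v) ν = 0 := by
  have hset : Ioc 0 T ∩ Ico (ν - T) ν = ∅ := by
    ext η; simp only [mem_inter_iff, mem_Ioc, mem_Ico, mem_empty_iff_false, iff_false]
    simp only [mem_Ioc, not_and_or, not_lt, not_le] at hν; grind
  rw [convolution_indicator_Ioc_apply, hset, Measure.restrict_empty, integral_zero_measure]

theorem integrable_convolution_indicator_Ioc (hu : IntegrableOn u (Ioc 0 T))
    (hv : IntegrableOn v (Ioc 0 T)) :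
    Integrable ((Ioc 0 T).indicator u ⋆[ContinuousLinearMap.mul ℂ ℂ] (Ioc 0 T).indicator v) :=
  (hu.integrable_indicator measurableSet_Ioc).integrable_convolution _
    (hv.integrable_indicator measurableSet_Ioc)

theorem intervalIntegrable_integral_zero_mul_sub (hu : IntegrableOn u (Ioc 0 T))
    (hv : IntegrableOn v (Ioc 0 T)) (hT : 0 ≤ T) :
    IntervalIntegrable (fun ν => ∫ η in 0..ν, u η * v (ν - η)) volume 0 T := by
  rw [intervalIntegrable_iff_integrableOn_Ioc_of_le hT]
  exact (integrable_convolution_indicator_Ioc hu hv).integrableOn.congr_fun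
    (fun ν hν => convolution_indicator_Ioc_of_mem_Ioc hν) measurableSet_Ioc

theorem intervalIntegrable_integral_sub_mul_sub (hu : IntegrableOn u (Ioc 0 T))
    (hv : IntegrableOn v (Ioc 0 T)) (hT : 0 ≤ T) :
    IntervalIntegrable (fun ν => ∫ η in (ν - T)..T, u η * v (ν - η)) volume T (2 * T) := by
  rw [intervalIntegrable_iff_integrableOn_Ioc_of_le (by linarith)]
  exact (integrable_convolution_indicator_Ioc hu hv).integrableOn.congr_fun
    (fun ν hν => convolution_indicator_Ioc_of_mem_Ioc_two_mul hν) measurableSet_Ioc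

theorem intervalIntegral_mul_intervalIntegral_eq (hu : IntegrableOn u (Ioc 0 T))
    (hv : IntegrableOn v (Ioc 0 T)) (hT : 0 ≤ T) :
    (∫ ν in 0..T, u ν) * (∫ ν in 0..T, v ν)
      = (∫ ν in 0..T, ∫ η in 0..ν, u η * v (ν - η))
        + ∫ ν in T..(2 * T), ∫ η in (ν - T)..T, u η * v (ν - η) := by
  set W := (Ioc 0 T).indicator u ⋆[ContinuousLinearMap.mul ℂ ℂ] (Ioc 0 T).indicator v
  have hW := integrable_convolution_indicator_Ioc hu hv
  calc (∫ ν in 0..T, u ν) * (∫ ν in 0..T, v ν) = ∫ ν, W ν := by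
        rw [integral_convolution _ (hu.integrable_indicator measurableSet_Ioc)
          (hv.integrable_indicator measurableSet_Ioc), ContinuousLinearMap.mul_apply',
          integral_indicator measurableSet_Ioc, integral_indicator measurableSet_Ioc,
          intervalIntegral.integral_of_le hT, intervalIntegral.integral_of_le hT]
    _ = ∫ ν in 0..(2 * T), W ν := by
        rw [intervalIntegral.integral_of_le (by linarith),
          setIntegral_eq_integral_of_forall_compl_eq_zero
            fun ν hν => convolution_indicator_Ioc_of_notMem hν]
    _ = (∫ ν in 0..T, W ν) + ∫ ν in T..(2 * T), W ν :=
        (intervalIntegral.integral_add_adjacent_intervals hW.intervalIntegrable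
          hW.intervalIntegrable).symm
    _ = _ := by
        congr 1
        · refine intervalIntegral.integral_congr_ae (ae_of_all _ fun ν hν => ?_)
          rw [uIoc_of_le hT] at hν
          exact convolution_indicator_Ioc_of_mem_Ioc hν
        · refine intervalIntegral.integral_congr_ae (ae_of_all _ fun ν hν => ?_)
          rw [uIoc_of_le (by linarith)] at hν
          exact convolution_indicator_Ioc_of_mem_Ioc_two_mul hν

end TruncatedConvolution

theorem IntervalIntegrable.ofReal {u : ℝ → ℝ} {a b : ℝ} (hu : IntervalIntegrable u volume a b) :
    IntervalIntegrable (fun x => (u x : ℂ)) volume a b :=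
  intervalIntegrable_iff.2 (intervalIntegrable_iff.1 hu).ofReal

/- `deriv h` may be junk at `a` and `b`; inside the interval it agrees with the continuous
`derivWithin h (Icc a b)`. -/
theorem ContDiffOn.intervalIntegrable_deriv {h : ℝ → ℝ} {a b : ℝ} (hh : ContDiffOn ℝ 1 h (Icc a b))
    (hab : a ≤ b) : IntervalIntegrable (deriv h) volume a b := by
  rcases hab.eq_or_lt with rfl | hlt
  · exact IntervalIntegrable.refl
  rw [intervalIntegrable_iff_integrableOn_Ioo_of_le hab]
  have hc := (hh.continuousOn_derivWithin (uniqueDiffOn_Icc hlt) le_rfl).integrableOn_Icc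
    (μ := volume)
  exact (hc.mono_set Ioo_subset_Icc_self).congr_fun
    (fun x hx => derivWithin_of_mem_nhds (Icc_mem_nhds hx.1 hx.2)) measurableSet_Ioo

section Laplace

open Complex

variable {u v : ℝ → ℝ} {T : ℝ}

theorem intervalIntegral_deriv_mul_cexp {h : ℝ → ℝ} {a b : ℝ} (hab : a ≤ b)
    (hh : ContDiffOn ℝ 1 h (Icc a b)) (s : ℂ) :
    ∫ ν in a..b, ((deriv h ν : ℝ) : ℂ) * cexp (-(ν : ℂ) * s)
      = h b * cexp (-(b : ℂ) * s) - h a * cexp (-(a : ℂ) * s)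
        + s * ∫ ν in a..b, (h ν : ℂ) * cexp (-(ν : ℂ) * s) := by
  have hderiv : ∀ x ∈ Ioo (min a b) (max a b), HasDerivAt h (deriv h x) x := by
    rw [min_eq_left hab, max_eq_right hab]
    exact fun x hx => ((hh.differentiableOn one_ne_zero x (Ioo_subset_Icc_self hx)).differentiableAt
      (Icc_mem_nhds hx.1 hx.2)).hasDerivAt
  have hibp := intervalIntegral.integral_mul_deriv_eq_deriv_mul_of_hasDerivAt
    (u := fun x => (h x : ℂ)) (v := fun x => cexp (-(x : ℂ) * s))
    (v' := fun x => -s * cexp (-(x : ℂ) * s))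
    (continuous_ofReal.comp_continuousOn (hh.continuousOn.mono (by rw [uIcc_of_le hab])))
    (by fun_prop) (fun x hx => (hderiv x hx).ofReal_comp)
    (fun x _ => by
      simpa [mul_comm] using ((hasDerivAt_id (x : ℂ)).neg.mul_const s).cexp.comp_ofReal)
    (hh.intervalIntegrable_deriv hab).ofReal
    ((by fun_prop : Continuous fun x : ℝ => -s * cexp (-(x : ℂ) * s)).intervalIntegrable a b)
  simp only [mul_left_comm _ (-s), intervalIntegral.integral_const_mul] at hibp
  linear_combination hibp

theorem intervalIntegral_comp_sub_mul_cexp (h : ℝ → ℝ) (s : ℂ) (a b c : ℝ) :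
    ∫ ν in (a + c)..(b + c), (h (ν - c) : ℂ) * cexp (-(ν : ℂ) * s)
      = cexp (-(c : ℂ) * s) * ∫ ν in a..b, (h ν : ℂ) * cexp (-(ν : ℂ) * s) := by
  have hshift := intervalIntegral.integral_comp_sub_right
    (fun x => (h x : ℂ) * cexp (-((x + c : ℝ) : ℂ) * s)) c (a := a + c) (b := b + c)
  simp only [sub_add_cancel, add_sub_cancel_right] at hshift
  rw [hshift, ← intervalIntegral.integral_const_mul]
  congr 1 with x
  rw [mul_left_comm, ← Complex.exp_add]
  push_cast
  ring_nf

theorem intervalIntegral_ofReal_mul_cexp_mul_sub (u v : ℝ → ℝ) (s : ℂ) (a b ν : ℝ) :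
    ∫ η in a..b, (u η : ℂ) * cexp (-(η : ℂ) * s) * ((v (ν - η) : ℂ) * cexp (-((ν - η : ℝ) : ℂ) * s))
      = cexp (-(ν : ℂ) * s) * ↑(∫ η in a..b, u η * v (ν - η)) := by
  rw [← intervalIntegral.integral_ofReal, ← intervalIntegral.integral_const_mul]
  congr 1 with η
  have hexp : cexp (-(ν : ℂ) * s) = cexp (-(η : ℂ) * s) * cexp (-((ν - η : ℝ) : ℂ) * s) := by
    rw [← Complex.exp_add]; push_cast; ring_nf
  rw [hexp]
  push_cast
  ring

theorem IntervalIntegrable.ofReal_mul_cexp {a b : ℝ} (hu : IntervalIntegrable u volume a b)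
    (s : ℂ) : IntervalIntegrable (fun ν => (u ν : ℂ) * cexp (-(ν : ℂ) * s)) volume a b :=
  hu.ofReal.mul_continuousOn (by fun_prop)

theorem IntervalIntegrable.integrableOn_ofReal_mul_cexp (hu : IntervalIntegrable u volume 0 T)
    (hT : 0 ≤ T) (s : ℂ) :
    IntegrableOn (fun ν => (u ν : ℂ) * cexp (-(ν : ℂ) * s)) (Ioc 0 T) :=
  (intervalIntegrable_iff_integrableOn_Ioc_of_le hT).1 (hu.ofReal_mul_cexp s)

theorem intervalIntegrable_cexp_mul_integral_zero_mul_sub (hu : IntervalIntegrable u volume 0 T)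
    (hv : IntervalIntegrable v volume 0 T) (hT : 0 ≤ T) (s : ℂ) :
    IntervalIntegrable (fun ν => cexp (-(ν : ℂ) * s) * ↑(∫ η in 0..ν, u η * v (ν - η)))
      volume 0 T := by
  simpa only [intervalIntegral_ofReal_mul_cexp_mul_sub] using
    intervalIntegrable_integral_zero_mul_sub (hu.integrableOn_ofReal_mul_cexp hT s)
      (hv.integrableOn_ofReal_mul_cexp hT s) hT

theorem intervalIntegrable_cexp_mul_integral_sub_mul_sub (hu : IntervalIntegrable u volume 0 T)
    (hv : IntervalIntegrable v volume 0 T) (hT : 0 ≤ T) (s : ℂ) :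
    IntervalIntegrable (fun ν => cexp (-(ν : ℂ) * s) * ↑(∫ η in (ν - T)..T, u η * v (ν - η)))
      volume T (2 * T) := by
  simpa only [intervalIntegral_ofReal_mul_cexp_mul_sub] using
    intervalIntegrable_integral_sub_mul_sub (hu.integrableOn_ofReal_mul_cexp hT s)
      (hv.integrableOn_ofReal_mul_cexp hT s) hT

theorem laplace_mul_laplace_eq (hu : IntervalIntegrable u volume 0 T)
    (hv : IntervalIntegrable v volume 0 T) (hT : 0 ≤ T) (s : ℂ) :
    (∫ ν in 0..T, (u ν : ℂ) * cexp (-(ν : ℂ) * s))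
        * (∫ ν in 0..T, (v ν : ℂ) * cexp (-(ν : ℂ) * s))
      = (∫ ν in 0..T, cexp (-(ν : ℂ) * s) * ↑(∫ η in 0..ν, u η * v (ν - η)))
        + ∫ ν in T..(2 * T), cexp (-(ν : ℂ) * s) * ↑(∫ η in (ν - T)..T, u η * v (ν - η)) := by
  simpa only [intervalIntegral_ofReal_mul_cexp_mul_sub] using
    intervalIntegral_mul_intervalIntegral_eq (hu.integrableOn_ofReal_mul_cexp hT s)
      (hv.integrableOn_ofReal_mul_cexp hT s) hT

end Laplace

section CharacteristicIdentity

open Complex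

variable {M N f g : ℝ → ℝ}

theorem integral_cexp_mul_J1 (hf : IntervalIntegrable f volume 0 1)
    (hg : IntervalIntegrable g volume 0 1) (hN : IntervalIntegrable N volume 0 1)
    (hM' : IntervalIntegrable (deriv M) volume 0 1) (s : ℂ) :
    ∫ ν in (0:ℝ)..1, cexp (-(ν : ℂ) * s) * (J1 M N f g ν : ℂ)
      = (∫ ν in (0:ℝ)..1, (g ν : ℂ) * cexp (-(ν : ℂ) * s))
        + M 0 * (∫ ν in (0:ℝ)..1, (f ν : ℂ) * cexp (-(ν : ℂ) * s))
        + (∫ ν in (0:ℝ)..1, (N ν : ℂ) * cexp (-(ν : ℂ) * s))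
        + (∫ ν in (0:ℝ)..1, cexp (-(ν : ℂ) * s) * ↑(∫ η in (0:ℝ)..ν, f η * deriv M (ν - η)))
        - ∫ ν in (0:ℝ)..1, cexp (-(ν : ℂ) * s) * ↑(∫ η in (0:ℝ)..ν, g η * N (ν - η)) := by
  have hsplit : ∀ ν : ℝ, cexp (-(ν : ℂ) * s) * (J1 M N f g ν : ℂ)
      = (g ν : ℂ) * cexp (-(ν : ℂ) * s) + M 0 * ((f ν : ℂ) * cexp (-(ν : ℂ) * s))
        + (N ν : ℂ) * cexp (-(ν : ℂ) * s)
        + cexp (-(ν : ℂ) * s) * ↑(∫ η in (0:ℝ)..ν, f η * deriv M (ν - η))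
        - cexp (-(ν : ℂ) * s) * ↑(∫ η in (0:ℝ)..ν, g η * N (ν - η)) := fun ν => by
    simp only [J1]; push_cast; ring
  have hge := hg.ofReal_mul_cexp s
  have hfe := (hf.ofReal_mul_cexp s).const_mul (M 0 : ℂ)
  have hNe := hN.ofReal_mul_cexp s
  have hfM := intervalIntegrable_cexp_mul_integral_zero_mul_sub hf hM' zero_le_one s
  have hgN := intervalIntegrable_cexp_mul_integral_zero_mul_sub hg hN zero_le_one s
  simp only [hsplit]
  rw [intervalIntegral.integral_sub (((hge.add hfe).add hNe).add hfM) hgN,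
    intervalIntegral.integral_add ((hge.add hfe).add hNe) hfM,
    intervalIntegral.integral_add (hge.add hfe) hNe, intervalIntegral.integral_add hge hfe,
    intervalIntegral.integral_const_mul]

theorem integral_cexp_mul_J3 (a : ℝ) (hf : IntervalIntegrable f volume 0 1)
    (hg : IntervalIntegrable g volume 0 1) (hN : IntervalIntegrable N volume 0 1)
    (hM' : IntervalIntegrable (deriv M) volume 0 1) (s : ℂ) :
    ∫ ν in (1:ℝ)..2, cexp (-(ν : ℂ) * s) * (J3 a M N f g ν : ℂ)
      = -(M 1) * (cexp (-s) * ∫ ν in (0:ℝ)..1, (f ν : ℂ) * cexp (-(ν : ℂ) * s))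
        + (∫ ν in (1:ℝ)..2, cexp (-(ν : ℂ) * s) * ↑(∫ η in (ν - 1)..1, f η * deriv M (ν - η)))
        - a * (cexp (-s) * ∫ ν in (0:ℝ)..1, (g ν : ℂ) * cexp (-(ν : ℂ) * s))
        - ∫ ν in (1:ℝ)..2, cexp (-(ν : ℂ) * s) * ↑(∫ η in (ν - 1)..1, g η * N (ν - η)) := by
  have hsplit : ∀ ν : ℝ, cexp (-(ν : ℂ) * s) * (J3 a M N f g ν : ℂ)
      = -(M 1) * ((f (ν - 1) : ℂ) * cexp (-(ν : ℂ) * s))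
        + cexp (-(ν : ℂ) * s) * ↑(∫ η in (ν - 1)..1, f η * deriv M (ν - η))
        - a * ((g (ν - 1) : ℂ) * cexp (-(ν : ℂ) * s))
        - cexp (-(ν : ℂ) * s) * ↑(∫ η in (ν - 1)..1, g η * N (ν - η)) := fun ν => by
    simp only [J3]; push_cast; ring
  have hshift : ∀ h : ℝ → ℝ, ∫ ν in (1:ℝ)..2, (h (ν - 1) : ℂ) * cexp (-(ν : ℂ) * s)
      = cexp (-s) * ∫ ν in (0:ℝ)..1, (h ν : ℂ) * cexp (-(ν : ℂ) * s) := fun h => by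
    simpa only [zero_add, one_add_one_eq_two, ofReal_one, neg_one_mul] using
      intervalIntegral_comp_sub_mul_cexp h s 0 1 1
  have hshiftInt : ∀ h : ℝ → ℝ, IntervalIntegrable h volume 0 1 →
      IntervalIntegrable (fun ν => (h (ν - 1) : ℂ) * cexp (-(ν : ℂ) * s)) volume 1 2 :=
    fun h hh => by
      simpa only [zero_add, one_add_one_eq_two] using (hh.comp_sub_right 1).ofReal_mul_cexp s
  have hfe := (hshiftInt f hf).const_mul (-(M 1) : ℂ)
  have hge := (hshiftInt g hg).const_mul (a : ℂ)
  have hfM := intervalIntegrable_cexp_mul_integral_sub_mul_sub hf hM' zero_le_one s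
  have hgN := intervalIntegrable_cexp_mul_integral_sub_mul_sub hg hN zero_le_one s
  simp only [mul_one] at hfM hgN
  simp only [hsplit]
  rw [intervalIntegral.integral_sub ((hfe.add hfM).sub hge) hgN,
    intervalIntegral.integral_sub (hfe.add hfM) hge, intervalIntegral.integral_add hfe hfM,
    intervalIntegral.integral_const_mul, intervalIntegral.integral_const_mul, hshift, hshift]

end CharacteristicIdentity

/-- **Characteristic-equation identity (degenerate case b = 0, τ₀ = τ₁ = 1).**
For all `s ∈ ℂ`,
`F₀(s)(1 - ∫₀¹ g e^{-νs}) - (∫₀¹ M e^{-νs})(f(0) - f(1)e^{-s} + ∫₀¹ f' e^{-νs})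
  = 1 - a e^{-s} - ∫₀¹ e^{-νs} I₁ - ∫₁² e^{-νs} I₃`. -/
theorem stmt8
    (a : ℝ) (M N f g : ℝ → ℝ)
    (hM : ContDiffOn ℝ 1 M (Set.Icc 0 1)) (hN : ContDiffOn ℝ 1 N (Set.Icc 0 1))
    (hf : ContDiffOn ℝ 1 f (Set.Icc 0 1)) (hg : ContDiffOn ℝ 1 g (Set.Icc 0 1))
    (s : ℂ) :
    (1 - (a : ℂ) * Complex.exp (-s)
        - ∫ ν in (0:ℝ)..1, (N ν : ℂ) * Complex.exp (-(ν:ℂ) * s))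
      * (1 - ∫ ν in (0:ℝ)..1, (g ν : ℂ) * Complex.exp (-(ν:ℂ) * s))
    - (∫ ν in (0:ℝ)..1, (M ν : ℂ) * Complex.exp (-(ν:ℂ) * s))
      * ((f 0 : ℂ) - (f 1 : ℂ) * Complex.exp (-s)
          + ∫ ν in (0:ℝ)..1, ((deriv f ν : ℝ) : ℂ) * Complex.exp (-(ν:ℂ) * s))
    = 1 - (a : ℂ) * Complex.exp (-s)
      - (∫ ν in (0:ℝ)..1, Complex.exp (-(ν:ℂ) * s) * (J1 M N f g ν : ℂ))
      - ∫ ν in (1:ℝ)..2, Complex.exp (-(ν:ℂ) * s) * (J3 a M N f g ν : ℂ) := by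
  have hfi := hf.continuousOn.intervalIntegrable_of_Icc (μ := volume) zero_le_one
  have hgi := hg.continuousOn.intervalIntegrable_of_Icc (μ := volume) zero_le_one
  have hNi := hN.continuousOn.intervalIntegrable_of_Icc (μ := volume) zero_le_one
  have hM'i := hM.intervalIntegrable_deriv zero_le_one
  have hgN := laplace_mul_laplace_eq hgi hNi zero_le_one s
  have hfM' := laplace_mul_laplace_eq hfi hM'i zero_le_one s
  have hf' := intervalIntegral_deriv_mul_cexp zero_le_one hf s
  have hM' := intervalIntegral_deriv_mul_cexp zero_le_one hM s
  simp only [mul_one] at hgN hfM'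
  simp only [Complex.ofReal_one, Complex.ofReal_zero, neg_zero, zero_mul, Complex.exp_zero,
    neg_one_mul, mul_one] at hf' hM'
  rw [integral_cexp_mul_J1 hfi hgi hNi hM'i, integral_cexp_mul_J3 a hfi hgi hNi hM'i]
  set LM := ∫ ν in (0:ℝ)..1, (M ν : ℂ) * Complex.exp (-(ν:ℂ) * s)
  set Lf := ∫ ν in (0:ℝ)..1, (f ν : ℂ) * Complex.exp (-(ν:ℂ) * s)
  linear_combination hgN - LM * hf' - hfM' + Lf * hM'
end
end
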